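/- Let (H, α, m, η, Δ, ε, S) be a Hom-Hopf algebra with α invertible. Then the antipode S is anti-comultiplicative: Δ(S(a)) = S(a₂) ⊗ S(a₁) for all a ∈ H, and ε∘S = ε. -/

import Mathlib

open TensorProduct

noncomputable section
namespace HomTwist

variable {k : Type*} [CommRing k]

section Defs
variable {H₁ H₂ A B : Type*} [AddCommGroup H₁] [Module k H₁] [AddCommGroup H₂] [Module k H₂]
  [AddCommGroup A] [Module k A] [AddCommGroup B] [Module k B]

/-- The componentwise "action" of `H₁ ⊗ H₂` on `A ⊗ B` induced by bilinear actions
`f : H₁ → A → A` and `g : H₂ → B → B`:  `(h₁ ⊗ h₂) • (a ⊗ b) = (f h₁ a) ⊗ (g h₂ b)`. -/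
def pairMap (f : H₁ →ₗ[k] A →ₗ[k] A) (g : H₂ →ₗ[k] B →ₗ[k] B) :
    (H₁ ⊗[k] H₂) →ₗ[k] (A ⊗[k] B) →ₗ[k] A ⊗[k] B :=
  TensorProduct.lift (((TensorProduct.mapBilinear (σ₁₂ := RingHom.id k) (M := A) (N := B) (M₂ := A) (N₂ := B)).comp f).compl₂ g)

end Defs

section Structures
variable {H : Type*} [AddCommGroup H] [Module k H]

/-- Componentwise product on `H ⊗ H` induced by a bilinear multiplication on `H`. -/
def mulT (mul : H →ₗ[k] H →ₗ[k] H) : (H ⊗[k] H) →ₗ[k] (H ⊗[k] H) →ₗ[k] H ⊗[k] H :=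
  pairMap mul mul

/-- Componentwise product on `H ⊗ (H ⊗ H)`. -/
def mulT3 (mul : H →ₗ[k] H →ₗ[k] H) :
    (H ⊗[k] (H ⊗[k] H)) →ₗ[k] (H ⊗[k] (H ⊗[k] H)) →ₗ[k] H ⊗[k] (H ⊗[k] H) :=
  pairMap mul (mulT mul)

/-- `(r ⊗ R) ↦ r⁽¹⁾ ⊗ (R⁽¹⁾ ⊗ r⁽²⁾R⁽²⁾)`. -/
def hexA (mul : H →ₗ[k] H →ₗ[k] H) :
    ((H ⊗[k] H) ⊗[k] (H ⊗[k] H)) →ₗ[k] H ⊗[k] (H ⊗[k] H) :=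
  (TensorProduct.assoc k H H H).toLinearMap
    ∘ₗ TensorProduct.map LinearMap.id (TensorProduct.lift mul)
    ∘ₗ (TensorProduct.tensorTensorTensorComm k H H H H).toLinearMap

/-- `(r ⊗ R) ↦ r⁽¹⁾R⁽¹⁾ ⊗ (R⁽²⁾ ⊗ r⁽²⁾)`. -/
def hexB (mul : H →ₗ[k] H →ₗ[k] H) :
    ((H ⊗[k] H) ⊗[k] (H ⊗[k] H)) →ₗ[k] H ⊗[k] (H ⊗[k] H) :=
  TensorProduct.map (TensorProduct.lift mul) (TensorProduct.comm k H H).toLinearMap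
    ∘ₗ (TensorProduct.tensorTensorTensorComm k H H H H).toLinearMap

/-- Axioms of a monoidal Hom-bialgebra (Caenepeel–Goyvaerts). -/
structure IsMonHomBialgebra (mul : H →ₗ[k] H →ₗ[k] H) (one : H) (alpha : H ≃ₗ[k] H)
    (comul : H →ₗ[k] H ⊗[k] H) (counit : H →ₗ[k] k) : Prop where
  alpha_mul : ∀ a b, alpha (mul a b) = mul (alpha a) (alpha b)
  hom_assoc : ∀ a b c, mul (alpha a) (mul b c) = mul (mul a b) (alpha c)
  alpha_one : alpha one = one
  one_mul' : ∀ a, mul one a = alpha a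
  mul_one' : ∀ a, mul a one = alpha a
  comul_alpha : ∀ c, comul (alpha c)
      = TensorProduct.map alpha.toLinearMap alpha.toLinearMap (comul c)
  hom_coassoc : ∀ c,
      TensorProduct.map alpha.symm.toLinearMap comul (comul c)
        = TensorProduct.assoc k H H H
            (TensorProduct.map comul alpha.symm.toLinearMap (comul c))
  counit_alpha : ∀ c, counit (alpha c) = counit c
  counit_id : ∀ c, TensorProduct.lid k H
      (TensorProduct.map counit LinearMap.id (comul c)) = alpha.symm c
  id_counit : ∀ c, TensorProduct.rid k H
      (TensorProduct.map LinearMap.id counit (comul c)) = alpha.symm c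
  comul_mul : ∀ a b, comul (mul a b) = mulT mul (comul a) (comul b)
  comul_one : comul one = one ⊗ₜ[k] one
  counit_mul : ∀ a b, counit (mul a b) = counit a * counit b
  counit_one : counit one = 1

/-- Axioms of a (Makhlouf–Silvestrov) Hom-bialgebra (with bijective structure map). -/
structure IsHomBialgebra (mul : H →ₗ[k] H →ₗ[k] H) (one : H) (alpha : H ≃ₗ[k] H)
    (comul : H →ₗ[k] H ⊗[k] H) (counit : H →ₗ[k] k) : Prop where
  alpha_mul : ∀ a b, alpha (mul a b) = mul (alpha a) (alpha b)
  hom_assoc : ∀ a b c, mul (alpha a) (mul b c) = mul (mul a b) (alpha c)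
  alpha_one : alpha one = one
  one_mul' : ∀ a, mul one a = alpha a
  mul_one' : ∀ a, mul a one = alpha a
  comul_alpha : ∀ c, comul (alpha c)
      = TensorProduct.map alpha.toLinearMap alpha.toLinearMap (comul c)
  hom_coassoc : ∀ c,
      TensorProduct.map alpha.toLinearMap comul (comul c)
        = TensorProduct.assoc k H H H
            (TensorProduct.map comul alpha.toLinearMap (comul c))
  counit_alpha : ∀ c, counit (alpha c) = counit c
  counit_id : ∀ c, TensorProduct.lid k H
      (TensorProduct.map counit LinearMap.id (comul c)) = alpha c
  id_counit : ∀ c, TensorProduct.rid k H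
      (TensorProduct.map LinearMap.id counit (comul c)) = alpha c
  comul_mul : ∀ a b, comul (mul a b) = mulT mul (comul a) (comul b)
  comul_one : comul one = one ⊗ₜ[k] one
  counit_mul : ∀ a b, counit (mul a b) = counit a * counit b
  counit_one : counit one = 1

/-- Axioms of an ordinary (possibly noncommutative) bialgebra, given by raw data. -/
structure IsBialgebra (mul : H →ₗ[k] H →ₗ[k] H) (one : H)
    (comul : H →ₗ[k] H ⊗[k] H) (counit : H →ₗ[k] k) : Prop where
  assoc : ∀ a b c, mul (mul a b) c = mul a (mul b c)
  one_mul' : ∀ a, mul one a = a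
  mul_one' : ∀ a, mul a one = a
  coassoc : ∀ c, TensorProduct.map LinearMap.id comul (comul c)
      = TensorProduct.assoc k H H H (TensorProduct.map comul LinearMap.id (comul c))
  counit_id : ∀ c, TensorProduct.lid k H
      (TensorProduct.map counit LinearMap.id (comul c)) = c
  id_counit : ∀ c, TensorProduct.rid k H
      (TensorProduct.map LinearMap.id counit (comul c)) = c
  comul_mul : ∀ a b, comul (mul a b) = mulT mul (comul a) (comul b)
  comul_one : comul one = one ⊗ₜ[k] one
  counit_mul : ∀ a b, counit (mul a b) = counit a * counit b
  counit_one : counit one = 1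

/-- A Drinfeld twist `σ` (with inverse `ϱ`) for a monoidal Hom-bialgebra. -/
structure IsTwist (mul : H →ₗ[k] H →ₗ[k] H) (one : H) (alpha : H ≃ₗ[k] H)
    (comul : H →ₗ[k] H ⊗[k] H) (counit : H →ₗ[k] k) (σ ϱ : H ⊗[k] H) : Prop where
  mul_inv : mulT mul σ ϱ = one ⊗ₜ[k] one
  inv_mul : mulT mul ϱ σ = one ⊗ₜ[k] one
  T1 : TensorProduct.map alpha.toLinearMap alpha.toLinearMap σ = σ
  T2l : TensorProduct.lid k H (TensorProduct.map counit LinearMap.id σ) = one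
  T2r : TensorProduct.rid k H (TensorProduct.map LinearMap.id counit σ) = one
  T3 : TensorProduct.map LinearMap.id (mulT mul σ)
        (TensorProduct.map LinearMap.id comul σ)
      = TensorProduct.assoc k H H H
          (TensorProduct.map (mulT mul σ) LinearMap.id
            (TensorProduct.map comul LinearMap.id σ))

/-- The `R`-matrix axioms (Q1)–(Q4) for a monoidal Hom-bialgebra. -/
structure IsRMatrix (mul : H →ₗ[k] H →ₗ[k] H) (alpha : H ≃ₗ[k] H)
    (comul : H →ₗ[k] H ⊗[k] H) (R : H ⊗[k] H) : Prop where
  Q1 : TensorProduct.map alpha.toLinearMap alpha.toLinearMap R = R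
  Q2 : ∀ h, mulT mul R (comul h)
      = mulT mul (TensorProduct.comm k H H (comul h)) R
  Q3 : TensorProduct.assoc k H H H (TensorProduct.map comul LinearMap.id R)
      = hexA mul (R ⊗ₜ[k] R)
  Q4 : TensorProduct.map LinearMap.id comul R = hexB mul (R ⊗ₜ[k] R)

/-- Axioms of a monoidal Hom-algebra. -/
structure IsMonHomAlgebra {A : Type*} [AddCommGroup A] [Module k A]
    (mul : A →ₗ[k] A →ₗ[k] A) (one : A) (alpha : A ≃ₗ[k] A) : Prop where
  alpha_mul : ∀ a b, alpha (mul a b) = mul (alpha a) (alpha b)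
  hom_assoc : ∀ a b c, mul (alpha a) (mul b c) = mul (mul a b) (alpha c)
  alpha_one : alpha one = one
  one_mul' : ∀ a, mul one a = alpha a
  mul_one' : ∀ a, mul a one = alpha a

/-- Axioms of a monoidal Hom-coalgebra. -/
structure IsMonHomCoalgebra {C : Type*} [AddCommGroup C] [Module k C]
    (comul : C →ₗ[k] C ⊗[k] C) (counit : C →ₗ[k] k) (alpha : C ≃ₗ[k] C) : Prop where
  comul_alpha : ∀ c, comul (alpha c)
      = TensorProduct.map alpha.toLinearMap alpha.toLinearMap (comul c)
  hom_coassoc : ∀ c,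
      TensorProduct.map alpha.symm.toLinearMap comul (comul c)
        = TensorProduct.assoc k C C C
            (TensorProduct.map comul alpha.symm.toLinearMap (comul c))
  counit_alpha : ∀ c, counit (alpha c) = counit c
  counit_id : ∀ c, TensorProduct.lid k C
      (TensorProduct.map counit LinearMap.id (comul c)) = alpha.symm c
  id_counit : ∀ c, TensorProduct.rid k C
      (TensorProduct.map LinearMap.id counit (comul c)) = alpha.symm c

/-- Axioms of a left `H`-Hom-module. -/
structure IsHomModule {M : Type*} [AddCommGroup M] [Module k M]
    (mul : H →ₗ[k] H →ₗ[k] H) (one : H) (alpha : H ≃ₗ[k] H)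
    (alM : M ≃ₗ[k] M) (act : H →ₗ[k] M →ₗ[k] M) : Prop where
  compat : ∀ h m, alM (act h m) = act (alpha h) (alM m)
  hom_smul : ∀ h h' m, act (alpha h) (act h' m) = act (mul h h') (alM m)
  one_smul' : ∀ m, act one m = alM m

/-- The twisted coproduct `Δᵠ(x) = (σ Δ(x)) ϱ`. -/
def twistComul (mul : H →ₗ[k] H →ₗ[k] H) (comul : H →ₗ[k] H ⊗[k] H)
    (σ ϱ : H ⊗[k] H) : H →ₗ[k] H ⊗[k] H :=
  ((mulT mul).flip ϱ) ∘ₗ (mulT mul σ) ∘ₗ comul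

end Structures
end HomTwist
end


/-!
With `β = α⁻¹`, the product `β ∘ m` and the coproduct `(β ⊗ β) ∘ Δ` make `H` an ordinary
bialgebra with the same unit and counit, and `S`, which commutes with `β`, is an antipode for it.
In an ordinary Hopf algebra `Δ ∘ S` and `τ ∘ (S ⊗ S) ∘ Δ` are a right and a left inverse of `Δ`
for the convolution product on `Hom(H, H ⊗ H)`, hence equal. Since the untwisted coproduct
differs from `Δ` by the invertible map `β ⊗ β`, which commutes with `τ ∘ (S ⊗ S)`, the identity
transfers back to `Δ`; the counit is not changed by untwisting at all.
-/

section HopfAlgebra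
open TensorProduct LinearMap Coalgebra HopfAlgebra WithConv

variable {R A : Type*} [CommSemiring R] [Semiring A] [HopfAlgebra R A]

theorem LinearMap.comm_map_antipode_comul_mul_comul :
    toConv ((TensorProduct.comm R A A).toLinearMap ∘ₗ map (antipode R) (antipode R) ∘ₗ comul) *
      toConv comul = 1 := by
  have hS : mul' R A ∘ₗ map (antipode R) id ∘ₗ comul = Algebra.linearMap R A ∘ₗ counit :=
    mul_antipode_rTensor_comul
  refine WithConv.ext ?_
  calc mul' R (A ⊗[R] A) ∘ₗ
        map ((TensorProduct.comm R A A).toLinearMap ∘ₗ map (antipode R) (antipode R) ∘ₗ comul)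
          comul ∘ₗ comul
      = map (Algebra.linearMap R A)
          (mul' R A ∘ₗ map (antipode R) id ∘ₗ (TensorProduct.comm R A A).toLinearMap) ∘ₗ
          (TensorProduct.assoc R R A A).toLinearMap ∘ₗ map (map counit id ∘ₗ comul) id ∘ₗ
          (TensorProduct.comm R A A).toLinearMap ∘ₗ comul := by
        rw [mul'_tensor]
        simp only [coassoc_simps, hS]
    _ = Algebra.linearMap R (A ⊗[R] A) ∘ₗ counit := by
        rw [CoassocSimps.map_counit_comp_comul_left]
        simp only [coassoc_simps, hS]
        ext x
        simp [Algebra.algebraMap_eq_smul_one, Algebra.TensorProduct.one_def, tmul_smul]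

theorem HopfAlgebra.comul_comp_antipode :
    comul ∘ₗ antipode R
      = (TensorProduct.comm R A A).toLinearMap ∘ₗ map (antipode R) (antipode R) ∘ₗ comul :=
  congrArg ofConv
    (left_inv_eq_right_inv comm_map_antipode_comul_mul_comul comul_right_inv).symm

end HopfAlgebra

namespace HomTwist
open TensorProduct LinearMap

variable {k H : Type*} [CommRing k] [AddCommGroup H] [Module k H]
  {mul : H →ₗ[k] H →ₗ[k] H} {one : H} {alpha : H ≃ₗ[k] H} {comul : H →ₗ[k] H ⊗[k] H}
  {counit : H →ₗ[k] k} {S : H →ₗ[k] H}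

@[simp]
lemma mulT_tmul (mul : H →ₗ[k] H →ₗ[k] H) (a b c d : H) :
    mulT mul (a ⊗ₜ[k] b) (c ⊗ₜ[k] d) = mul a c ⊗ₜ[k] mul b d := rfl

lemma mulT_compr₂ (mul : H →ₗ[k] H →ₗ[k] H) (f : H →ₗ[k] H) (s t : H ⊗[k] H) :
    mulT (mul.compr₂ f) s t = map f f (mulT mul s t) := by
  change mulT (mul.compr₂ f) s t = (mulT mul).compr₂ (map f f) s t
  congr 2
  ext
  rfl

lemma mulT_map (mul : H →ₗ[k] H →ₗ[k] H) (f : H →ₗ[k] H)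
    (hf : ∀ a b, f (mul a b) = mul (f a) (f b)) (s t : H ⊗[k] H) :
    mulT mul (map f f s) (map f f t) = map f f (mulT mul s t) := by
  change (mulT mul).compl₁₂ (map f f) (map f f) s t = (mulT mul).compr₂ (map f f) s t
  congr 2
  ext
  simp [hf]

namespace IsBialgebra

abbrev toRing (h : IsBialgebra mul one comul counit) : Ring H where
  __ := ‹AddCommGroup H›
  mul a b := mul a b
  one := one
  mul_assoc := h.assoc
  one_mul := h.one_mul'
  mul_one := h.mul_one'
  left_distrib a := (mul a).map_add
  right_distrib := mul.map_add₂
  zero_mul := mul.map_zero₂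
  mul_zero a := (mul a).map_zero

abbrev toAlgebra (h : IsBialgebra mul one comul counit) :
    letI := h.toRing
    Algebra k H :=
  letI := h.toRing
  Algebra.ofModule mul.map_smul₂ fun r a => (mul a).map_smul r

abbrev toCoalgebra (h : IsBialgebra mul one comul counit) : Coalgebra k H where
  comul := comul
  counit := counit
  coassoc := LinearMap.ext fun c => (h.coassoc c).symm
  rTensor_counit_comp_comul := LinearMap.ext fun c =>
    ((TensorProduct.lid k H).eq_symm_apply.mpr (h.counit_id c)).trans (by simp)
  lTensor_counit_comp_comul := LinearMap.ext fun c =>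
    ((TensorProduct.rid k H).eq_symm_apply.mpr (h.id_counit c)).trans (by simp)

lemma mulT_eq_mul (h : IsBialgebra mul one comul counit) (s t : H ⊗[k] H) :
    letI := h.toRing
    letI := h.toAlgebra
    mulT mul s t = s * t := by
  let := h.toRing
  let := h.toAlgebra
  change mulT mul s t = LinearMap.mul k (H ⊗[k] H) s t
  congr 2
  ext a b c d
  exact (Algebra.TensorProduct.tmul_mul_tmul a c b d).symm

abbrev toHopfAlgebra (h : IsBialgebra mul one comul counit) (S : H →ₗ[k] H)
    (hS₁ : ∀ x, lift mul (map S LinearMap.id (comul x)) = counit x • one)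
    (hS₂ : ∀ x, lift mul (map LinearMap.id S (comul x)) = counit x • one) :
    letI := h.toRing
    letI := h.toAlgebra
    HopfAlgebra k H :=
  letI := h.toRing
  letI := h.toAlgebra
  letI := h.toCoalgebra
  { Bialgebra.mk' k H h.counit_one (h.counit_mul _ _) h.comul_one
      (fun {a b} => (h.comul_mul a b).trans (h.mulT_eq_mul _ _)) with
    antipode := S
    mul_antipode_rTensor_comul :=
      LinearMap.ext fun x => (hS₁ x).trans (Algebra.algebraMap_eq_smul_one _).symm
    mul_antipode_lTensor_comul :=
      LinearMap.ext fun x => (hS₂ x).trans (Algebra.algebraMap_eq_smul_one _).symm }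

theorem comul_antipode (h : IsBialgebra mul one comul counit)
    (hS₁ : ∀ x, lift mul (map S LinearMap.id (comul x)) = counit x • one)
    (hS₂ : ∀ x, lift mul (map LinearMap.id S (comul x)) = counit x • one) (a : H) :
    comul (S a) = TensorProduct.comm k H H (map S S (comul a)) := by
  let := h.toRing
  let := h.toAlgebra
  let := h.toHopfAlgebra S hS₁ hS₂
  exact LinearMap.congr_fun HopfAlgebra.comul_comp_antipode a

theorem counit_antipode (h : IsBialgebra mul one comul counit)
    (hS₁ : ∀ x, lift mul (map S LinearMap.id (comul x)) = counit x • one)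
    (hS₂ : ∀ x, lift mul (map LinearMap.id S (comul x)) = counit x • one) (a : H) :
    counit (S a) = counit a := by
  let := h.toRing
  let := h.toAlgebra
  let := h.toHopfAlgebra S hS₁ hS₂
  exact HopfAlgebra.counit_antipode a

end IsBialgebra

def untwistMul (mul : H →ₗ[k] H →ₗ[k] H) (alpha : H ≃ₗ[k] H) : H →ₗ[k] H →ₗ[k] H :=
  mul.compr₂ alpha.symm.toLinearMap

def untwistComul (alpha : H ≃ₗ[k] H) (comul : H →ₗ[k] H ⊗[k] H) : H →ₗ[k] H ⊗[k] H :=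
  map alpha.symm.toLinearMap alpha.symm.toLinearMap ∘ₗ comul

namespace IsHomBialgebra

theorem symm_mul (hH : IsHomBialgebra mul one alpha comul counit) (a b : H) :
    alpha.symm (mul a b) = mul (alpha.symm a) (alpha.symm b) :=
  alpha.symm_apply_eq.mpr (by simp [hH.alpha_mul])

theorem symm_one (hH : IsHomBialgebra mul one alpha comul counit) : alpha.symm one = one :=
  alpha.symm_apply_eq.mpr hH.alpha_one.symm

theorem counit_symm (hH : IsHomBialgebra mul one alpha comul counit) (c : H) :
    counit (alpha.symm c) = counit c := by
  rw [← hH.counit_alpha, alpha.apply_symm_apply]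

theorem comul_symm (hH : IsHomBialgebra mul one alpha comul counit) (c : H) :
    comul (alpha.symm c) = map alpha.symm.toLinearMap alpha.symm.toLinearMap (comul c) := by
  have := congrArg (map alpha.symm.toLinearMap alpha.symm.toLinearMap)
    (hH.comul_alpha (alpha.symm c))
  rw [alpha.apply_symm_apply] at this
  rw [this, map_map, LinearEquiv.symm_comp, map_id, id_apply]

theorem untwistComul_coassoc (hH : IsHomBialgebra mul one alpha comul counit) :
    map id (untwistComul alpha comul) ∘ₗ untwistComul alpha comul
      = (TensorProduct.assoc k H H H).toLinearMap ∘ₗ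
          map (untwistComul alpha comul) id ∘ₗ untwistComul alpha comul := by
  have hco : map alpha.toLinearMap comul ∘ₗ comul
      = (TensorProduct.assoc k H H H).toLinearMap ∘ₗ map comul alpha.toLinearMap ∘ₗ comul :=
    LinearMap.ext hH.hom_coassoc
  have hΔ : comul ∘ₗ alpha.symm.toLinearMap
      = map alpha.symm.toLinearMap alpha.symm.toLinearMap ∘ₗ comul :=
    LinearMap.ext hH.comul_symm
  calc _ = map (alpha.symm.toLinearMap ∘ₗ alpha.symm.toLinearMap)
          (map (alpha.symm.toLinearMap ∘ₗ alpha.symm.toLinearMap)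
            (alpha.symm.toLinearMap ∘ₗ alpha.symm.toLinearMap)) ∘ₗ
          map alpha.toLinearMap comul ∘ₗ comul := by
        simp only [untwistComul, coassoc_simps, hΔ]
    _ = _ := by
        rw [hco]
        simp only [untwistComul, coassoc_simps, hΔ]

theorem isBialgebra_untwist (hH : IsHomBialgebra mul one alpha comul counit) :
    IsBialgebra (untwistMul mul alpha) one (untwistComul alpha comul) counit := by
  have hε : counit ∘ₗ alpha.symm.toLinearMap = counit := LinearMap.ext hH.counit_symm
  have hεΔ : (TensorProduct.lid k H).toLinearMap ∘ₗ map counit id ∘ₗ comul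
      = alpha.toLinearMap := LinearMap.ext hH.counit_id
  have hΔε : (TensorProduct.rid k H).toLinearMap ∘ₗ map id counit ∘ₗ comul
      = alpha.toLinearMap := LinearMap.ext hH.id_counit
  exact
  { assoc := fun p q r => by
      simpa [untwistMul, hH.symm_mul] using congrArg alpha.symm
        (hH.hom_assoc (alpha.symm p) (alpha.symm q) (alpha.symm r)).symm
    one_mul' := fun a => by simp [untwistMul, hH.one_mul']
    mul_one' := fun a => by simp [untwistMul, hH.mul_one']
    coassoc := LinearMap.congr_fun hH.untwistComul_coassoc
    counit_id := LinearMap.congr_fun (show (TensorProduct.lid k H).toLinearMap ∘ₗ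
        map counit id ∘ₗ untwistComul alpha comul = LinearMap.id by
      simp only [untwistComul, coassoc_simps, hε, hεΔ])
    id_counit := LinearMap.congr_fun (show (TensorProduct.rid k H).toLinearMap ∘ₗ
        map id counit ∘ₗ untwistComul alpha comul = LinearMap.id by
      simp only [untwistComul, coassoc_simps, hε, hΔε])
    comul_mul := fun a b => by
      simp only [untwistComul, untwistMul, comp_apply, compr₂_apply, mulT_compr₂,
        mulT_map _ _ hH.symm_mul, LinearEquiv.coe_coe, hH.comul_symm, hH.comul_mul]
    comul_one := by simp [untwistComul, hH.comul_one, hH.symm_one]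
    counit_mul := fun a b => by simp [untwistMul, hH.counit_symm, hH.counit_mul]
    counit_one := hH.counit_one }

theorem lift_untwistMul_map_untwistComul (hH : IsHomBialgebra mul one alpha comul counit)
    {f g : H →ₗ[k] H} (hf : ∀ x, f (alpha.symm x) = alpha.symm (f x))
    (hg : ∀ x, g (alpha.symm x) = alpha.symm (g x))
    (hfg : ∀ x, lift mul (map f g (comul x)) = counit x • one) (x : H) :
    lift (untwistMul mul alpha) (map f g (untwistComul alpha comul x)) = counit x • one := by
  have hmap : ∀ t, map f g (map alpha.symm.toLinearMap alpha.symm.toLinearMap t)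
      = map alpha.symm.toLinearMap alpha.symm.toLinearMap (map f g t) := fun t => by
    have hf' : f ∘ₗ alpha.symm.toLinearMap = alpha.symm.toLinearMap ∘ₗ f := LinearMap.ext hf
    have hg' : g ∘ₗ alpha.symm.toLinearMap = alpha.symm.toLinearMap ∘ₗ g := LinearMap.ext hg
    rw [map_map, map_map, hf', hg']
  have hlift : ∀ t, lift mul (map alpha.symm.toLinearMap alpha.symm.toLinearMap t)
      = alpha.symm (lift mul t) :=
    LinearMap.congr_fun (TensorProduct.ext' fun a b => (hH.symm_mul a b).symm :
      lift mul ∘ₗ map alpha.symm.toLinearMap alpha.symm.toLinearMap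
        = alpha.symm.toLinearMap ∘ₗ lift mul)
  calc lift (untwistMul mul alpha) (map f g (untwistComul alpha comul x))
      = alpha.symm (lift mul (map f g (map alpha.symm.toLinearMap alpha.symm.toLinearMap
          (comul x)))) := by
        rw [untwistMul, lift_compr₂]
        rfl
    _ = alpha.symm (alpha.symm (lift mul (map f g (comul x)))) := by rw [hmap, hlift]
    _ = counit x • one := by simp [hfg, hH.symm_one]

end IsHomBialgebra

end HomTwist

namespace HomTwist
open TensorProduct

/-- The antipode of a Hom-Hopf algebra (with invertible structure
map `α`) is anti-comultiplicative and preserves the counit. -/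
theorem hom_hopf_antipode_anti_comul
    {k H : Type*} [CommRing k] [AddCommGroup H] [Module k H]
    (mul : H →ₗ[k] H →ₗ[k] H) (one : H) (alpha : H ≃ₗ[k] H)
    (comul : H →ₗ[k] H ⊗[k] H) (counit : H →ₗ[k] k) (S : H →ₗ[k] H)
    (hH : IsHomBialgebra mul one alpha comul counit)
    (hS₁ : ∀ x, TensorProduct.lift mul
        (TensorProduct.map S LinearMap.id (comul x)) = counit x • one)
    (hS₂ : ∀ x, TensorProduct.lift mul
        (TensorProduct.map LinearMap.id S (comul x)) = counit x • one)
    (hSα : ∀ x, S (alpha x) = alpha (S x)) :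
    (∀ a, comul (S a)
        = TensorProduct.comm k H H (TensorProduct.map S S (comul a)))
      ∧ ∀ a, counit (S a) = counit a := by
  have hSβ : ∀ x, S (alpha.symm x) = alpha.symm (S x) :=
    Function.Semiconj.inverses_right hSα alpha.apply_symm_apply alpha.symm_apply_apply
  have hU := hH.isBialgebra_untwist
  have hU₁ := hH.lift_untwistMul_map_untwistComul (g := LinearMap.id) hSβ (fun _ => rfl) hS₁
  have hU₂ := hH.lift_untwistMul_map_untwistComul (f := LinearMap.id) (fun _ => rfl) hSβ hS₂
  refine ⟨fun a => (TensorProduct.congr alpha.symm alpha.symm).injective ?_,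
    hU.counit_antipode hU₁ hU₂⟩
  calc map alpha.symm.toLinearMap alpha.symm.toLinearMap (comul (S a))
      = TensorProduct.comm k H H (map S S (untwistComul alpha comul a)) :=
        hU.comul_antipode hU₁ hU₂ a
    _ = map alpha.symm.toLinearMap alpha.symm.toLinearMap
          (TensorProduct.comm k H H (map S S (comul a))) := by
        have hSβ' : S ∘ₗ alpha.symm.toLinearMap = alpha.symm.toLinearMap ∘ₗ S := LinearMap.ext hSβ
        rw [untwistComul, LinearMap.comp_apply, map_map, map_comm, map_map, hSβ']

end HomTwist
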